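/- Let G be a connected graph on n vertices and let x ∈ ℝⁿ be a stochastic vector (nonnegative entries summing to 1). Then Φ_G(x) ≥ (4/27)·Φ(x)³. -/

import Mathlib

open MeasureTheory ProbabilityTheory Real
open scoped ENNReal BigOperators

/-- The quadratic node potential `Φ(x) = Σᵢ (xᵢ - x̄)²`. -/
noncomputable def nodePotential {n : ℕ} (x : Fin n → ℝ) : ℝ :=
  ∑ i, (x i - (∑ j, x j) / n) ^ 2

/-- The quadratic edge potential `Φ_G(x) = Σ_{{i,j} ∈ E(G)} (xᵢ - xⱼ)²`
(each unordered edge counted once). -/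
noncomputable def edgePotential {n : ℕ} (G : SimpleGraph (Fin n)) [DecidableRel G.Adj]
    (x : Fin n → ℝ) : ℝ :=
  (1 / 2) * ∑ i, ∑ j, (if G.Adj i j then (x i - x j) ^ 2 else 0)

set_option maxHeartbeats 1000000

section Aux
open Finset


-- list Cauchy-Schwarz
lemma listCS (l : List ℝ) : l.sum ^ 2 ≤ l.length * (l.map (· ^ 2)).sum := by
  induction l with
  | nil => simp
  | cons a l ih =>
    simp only [List.sum_cons, List.map_cons, List.length_cons]
    have hq : 0 ≤ (l.map (· ^ 2)).sum := by
      apply List.sum_nonneg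
      intro y hy
      obtain ⟨z, _, rfl⟩ := List.mem_map.mp hy
      positivity
    rcases Nat.eq_zero_or_pos l.length with h0 | h0
    · obtain rfl := List.eq_nil_of_length_eq_zero h0
      simp
    · set L : ℝ := (l.length : ℝ) with hLdef
      set s : ℝ := l.sum
      set q : ℝ := (l.map (· ^ 2)).sum
      have hLpos : (0:ℝ) < L := by rw [hLdef]; exact_mod_cast h0
      have h2 : 0 ≤ L*(L*q - s^2) + (L*q - s^2) + (s - L*a)^2 := by
        have := sub_nonneg.mpr ih
        have := mul_nonneg hLpos.le this
        nlinarith [sq_nonneg (s - L*a)]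
      have hid : L*((L+1)*(a^2+q)) - L*((a+s)^2)
          = L*(L*q - s^2) + (L*q - s^2) + (s - L*a)^2 := by ring
      have hm : L*((a+s)^2) ≤ L*((L+1)*(a^2+q)) := by linarith
      have := le_of_mul_le_mul_left hm hLpos
      push_cast
      linarith

variable {n : ℕ} {G : SimpleGraph (Fin n)}

lemma telescope (y : Fin n → ℝ) {v u : Fin n} (p : G.Walk v u) :
    (p.darts.map fun d => y d.fst - y d.snd).sum = y v - y u := by
  induction p with
  | nil => simp
  | cons h p ih => simp [ih]

noncomputable def esum (y : Fin n → ℝ) {v u : Fin n} (p : G.Walk v u) : ℝ :=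
  (p.darts.map fun d => (y d.fst - y d.snd) ^ 2).sum

lemma esum_nonneg (y : Fin n → ℝ) {v u : Fin n} (p : G.Walk v u) : 0 ≤ esum y p := by
  apply List.sum_nonneg
  intro z hz
  obtain ⟨d, _, rfl⟩ := List.mem_map.mp hz
  positivity

lemma chainCS (y : Fin n → ℝ) {v u : Fin n} (p : G.Walk v u) :
    (y v - y u) ^ 2 ≤ p.length * esum y p := by
  have h := listCS (p.darts.map fun d => y d.fst - y d.snd)
  rw [telescope] at h
  simpa [esum, List.map_map, Function.comp_def, SimpleGraph.Walk.length_darts] using h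



lemma escape (x : Fin n → ℝ) (c : ℝ) {v u : Fin n} (p : G.Walk v u) (hu : x u ≤ c) :
    ∃ (u' : Fin n) (q : G.Walk v u'), q.IsPath ∧ x u' ≤ c ∧
      ∀ w ∈ q.support, w ≠ u' → c < x w := by
  induction p with
  | nil =>
    exact ⟨_, .nil, SimpleGraph.Walk.IsPath.nil, hu, by
      intro w hw hne; simp at hw; exact absurd hw hne⟩
  | @cons a b u h p ih =>
    by_cases hv : x a ≤ c
    · exact ⟨a, .nil, SimpleGraph.Walk.IsPath.nil, hv, by
        intro w hw hne; simp at hw; exact absurd hw hne⟩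
    · push_neg at hv
      obtain ⟨u', q, hq, hu', hall⟩ := ih hu
      by_cases hvq : a ∈ q.support
      · refine ⟨u', q.dropUntil a hvq, hq.dropUntil hvq, hu', ?_⟩
        intro w hw hne
        exact hall w (SimpleGraph.Walk.support_dropUntil_subset q hvq hw) hne
      · refine ⟨u', SimpleGraph.Walk.cons h q, hq.cons hvq, hu', ?_⟩
        intro w hw hne
        rw [SimpleGraph.Walk.support_cons, List.mem_cons] at hw
        rcases hw with rfl | hw
        · exact hv
        · exact hall w hw hne



variable [DecidableRel G.Adj]


lemma edgePotential_nonneg (y : Fin n → ℝ) : 0 ≤ edgePotential G y := by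
  unfold edgePotential
  have : ∀ i j : Fin n, 0 ≤ (if G.Adj i j then (y i - y j) ^ 2 else 0) := by
    intro i j; split <;> positivity
  positivity

lemma esum_le_edgePotential (y : Fin n → ℝ) {v u : Fin n} (p : G.Walk v u)
    (hp : p.IsPath) : esum y p ≤ edgePotential G y := by
  classical
  set h : Fin n × Fin n → ℝ :=
    fun pr => if G.Adj pr.1 pr.2 then (y pr.1 - y pr.2) ^ 2 else 0 with hdef
  have hnonneg : ∀ pr, 0 ≤ h pr := by intro pr; simp only [hdef]; split <;> positivity
  have hedges : p.edges.Nodup := hp.isTrail.edges_nodup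
  have hdarts : p.darts.Nodup := List.Nodup.of_map _ hedges
  -- injectivity of dart → edge on the darts list
  have hinj := List.inj_on_of_nodup_map (f := SimpleGraph.Dart.edge) hedges
  -- esum as a Finset sum over the dart set
  have hes : esum y p = ∑ d ∈ p.darts.toFinset, (y d.fst - y d.snd) ^ 2 := by
    rw [List.sum_toFinset _ hdarts]
    rfl
  set A : Finset (Fin n × Fin n) := p.darts.toFinset.image (fun d => d.toProd) with hA
  have hAsum : ∑ pr ∈ A, h pr = esum y p := by
    rw [hes, hA, Finset.sum_image]
    · apply Finset.sum_congr rfl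
      intro d _
      simp only [hdef]
      rw [if_pos d.adj]
    · intro d _ e _ hde
      exact SimpleGraph.Dart.toProd_injective hde
  set B : Finset (Fin n × Fin n) := A.image Prod.swap with hB
  have hBsum : ∑ pr ∈ B, h pr = ∑ pr ∈ A, h pr := by
    rw [hB, Finset.sum_image]
    · apply Finset.sum_congr rfl
      intro pr hpr
      -- pr comes from a dart so adjacency holds
      obtain ⟨d, hd, rfl⟩ := Finset.mem_image.mp hpr
      simp only [hdef, Prod.fst_swap, Prod.snd_swap]
      rw [if_pos d.adj, if_pos d.adj.symm]
      ring
    · intro a _ b _ hab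
      exact Prod.swap_injective hab
  have hdisj : Disjoint A B := by
    rw [Finset.disjoint_left]
    rintro pr hprA hprB
    obtain ⟨d, hd, hd2⟩ := Finset.mem_image.mp hprA
    obtain ⟨pr', hpr', hpr2⟩ := Finset.mem_image.mp hprB
    obtain ⟨e, he, he2⟩ := Finset.mem_image.mp hpr'
    -- d.toProd = pr, e.toProd.swap = pr
    have hedge : d.edge = e.edge := by
      rw [SimpleGraph.Dart.edge, SimpleGraph.Dart.edge, hd2, ← hpr2, ← he2]
      exact Sym2.mk_prod_swap_eq.symm
    have : d = e := hinj (List.mem_toFinset.mp hd) (List.mem_toFinset.mp he) hedge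
    subst this
    have h1 : pr' = pr := by rw [← he2, hd2]
    rw [h1] at hpr2
    have hfs : d.fst = d.snd := by
      have h2 := congrArg Prod.fst hpr2
      simp only [Prod.fst_swap] at h2
      rw [← hd2] at h2
      exact h2.symm
    exact d.fst_ne_snd hfs
  have hsub : A ∪ B ⊆ Finset.univ := Finset.subset_univ _
  have hle : ∑ pr ∈ A ∪ B, h pr ≤ ∑ pr : Fin n × Fin n, h pr :=
    Finset.sum_le_sum_of_subset_of_nonneg hsub (fun pr _ _ => hnonneg pr)
  rw [Finset.sum_union hdisj] at hle
  have htot : ∑ pr : Fin n × Fin n, h pr = 2 * edgePotential G y := by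
    rw [edgePotential, Fintype.sum_prod_type]
    ring
  rw [hAsum, hBsum, hAsum, htot] at hle
  linarith [hle]

lemma core (hconn : G.Connected) (x : Fin n → ℝ) (c : ℝ) (v : Fin n)
    (hvc : c ≤ x v) (hu : ∃ u, x u ≤ c) :
    (x v - c) ^ 2 ≤ ((univ.filter (fun i => c < x i)).card : ℝ) * edgePotential G x := by
  classical
  obtain ⟨u, hu⟩ := hu
  obtain ⟨p⟩ := hconn.preconnected v u
  obtain ⟨u', q, hq, hu', hall⟩ := escape x c p hu
  have hsupnodup := hq.support_nodup
  have hsub : q.support.toFinset ⊆ insert u' (univ.filter (fun i => c < x i)) := by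
    intro w hw
    rw [List.mem_toFinset] at hw
    by_cases hwu : w = u'
    · subst hwu; exact mem_insert_self _ _
    · exact mem_insert_of_mem (mem_filter.mpr ⟨mem_univ _, hall w hw hwu⟩)
  have hcard : q.support.toFinset.card = q.length + 1 := by
    rw [List.toFinset_card_of_nodup hsupnodup, SimpleGraph.Walk.length_support]
  have hlen : q.length ≤ (univ.filter (fun i => c < x i)).card := by
    have h1 := Finset.card_le_card hsub
    have h2 := Finset.card_insert_le u' (univ.filter (fun i => c < x i))
    omega
  have h1 : (x v - c) ^ 2 ≤ (x v - x u') ^ 2 :=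
    pow_le_pow_left₀ (by linarith) (by linarith) 2
  have h2 := chainCS x q
  have h3 := esum_le_edgePotential x q hq
  have h4 := esum_nonneg x q
  have h5 := edgePotential_nonneg (G := G) x
  have hc : (q.length : ℝ) ≤ ((univ.filter (fun i => c < x i)).card : ℝ) := by
    exact_mod_cast hlen
  have hl0 : (0:ℝ) ≤ (q.length : ℝ) := by positivity
  nlinarith

/-- For a connected graph `G` on `n` vertices and a stochastic vector
`x ∈ ℝⁿ`, `Φ_G(x) ≥ (4/27)·Φ(x)³`. -/
theorem stmt6 (n : ℕ) (G : SimpleGraph (Fin n)) [DecidableRel G.Adj]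
    (hconn : G.Connected)
    (x : Fin n → ℝ) (hx0 : ∀ i, 0 ≤ x i) (hx1 : (∑ i, x i) = 1) :
    (4 / 27) * nodePotential x ^ 3 ≤ edgePotential G x := by
  classical
  have hΦ0 : 0 ≤ nodePotential x := Finset.sum_nonneg fun i _ => sq_nonneg _
  have hG0 : 0 ≤ edgePotential G x := edgePotential_nonneg x
  have hn0 : n ≠ 0 := by rintro rfl; simp at hx1
  have hn : (0:ℝ) < n := by
    have := Nat.pos_of_ne_zero hn0; exact_mod_cast this
  obtain ⟨v, -, hv⟩ := Finset.exists_max_image univ x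
    ⟨⟨0, Nat.pos_of_ne_zero hn0⟩, mem_univ _⟩
  set M := x v with hMdef
  clear_value M
  have hM0 : ∀ i, x i ≤ M := fun i => hv i (mem_univ i)
  have hM1 : M ≤ 1 := by
    rw [hMdef, ← hx1]
    exact Finset.single_le_sum (fun i _ => hx0 i) (mem_univ v)
  have hMn : 1 ≤ (n:ℝ) * M := by
    rw [← hx1]
    calc ∑ i, x i ≤ ∑ _i : Fin n, M := Finset.sum_le_sum (fun i _ => hM0 i)
      _ = (n:ℝ) * M := by
        rw [Finset.sum_const, Finset.card_univ, Fintype.card_fin, nsmul_eq_mul]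
  have hMpos : 0 < M := by nlinarith
  have hsumsq : ∑ i, (x i) ^ 2 ≤ M := by
    calc ∑ i, (x i) ^ 2 ≤ ∑ i, M * x i := by
          apply Finset.sum_le_sum
          intro i _
          nlinarith [hx0 i, hM0 i]
      _ = M * ∑ i, x i := by rw [Finset.mul_sum]
      _ = M := by rw [hx1, mul_one]
  have hexp : nodePotential x = (∑ i, (x i) ^ 2) - 1 / n := by
    unfold nodePotential
    rw [hx1]
    have h1 : ∀ i : Fin n, (x i - 1 / (n:ℝ)) ^ 2
        = (x i) ^ 2 - (2 / n) * x i + (1 / n) ^ 2 := fun i => by ring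
    calc ∑ i, (x i - 1 / (n:ℝ)) ^ 2
        = ∑ i, ((x i) ^ 2 - (2 / (n:ℝ)) * x i + (1 / n) ^ 2) :=
          Finset.sum_congr rfl (fun i _ => h1 i)
      _ = (∑ i, (x i) ^ 2) - (2 / (n:ℝ)) * (∑ i, x i) + n * (1 / n) ^ 2 := by
          rw [Finset.sum_add_distrib, Finset.sum_sub_distrib, ← Finset.mul_sum,
            Finset.sum_const, Finset.card_univ, Fintype.card_fin, nsmul_eq_mul]
      _ = (∑ i, (x i) ^ 2) - 1 / n := by
          rw [hx1]
          field_simp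
          ring
  have hΦle : nodePotential x ≤ M - 1 / n := by rw [hexp]; linarith
  by_cases hM3 : 3 / (n:ℝ) < M
  · -- Case A
    set k := ⌈(3:ℝ) / M⌉₊ with hkdef
    clear_value k
    have h3M : (3:ℝ) ≤ 3 / M := by
      rw [le_div_iff₀ hMpos]; nlinarith
    have hk3 : 3 ≤ k := by
      rw [hkdef]
      have h := Nat.ceil_mono h3M
      simpa using h
    have hkc : (3:ℝ) / M ≤ k := by rw [hkdef]; exact Nat.le_ceil _
    have hkc2 : (k:ℝ) - 1 < 3 / M := by
      have := Nat.ceil_lt_add_one (show (0:ℝ) ≤ 3 / M by positivity)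
      rw [← hkdef] at this
      linarith
    have hkpos : (0:ℝ) < k := by
      have : 0 < k := by omega
      exact_mod_cast this
    set c := 1 / (k:ℝ) with hcdef
    clear_value c
    have hcM : c ≤ M / 3 := by
      rw [hcdef, div_le_div_iff₀ hkpos (by norm_num)]
      have h := mul_le_mul_of_nonneg_left hkc hMpos.le
      have h2 : M * (3 / M) = 3 := by field_simp
      linarith
    have hcv : c ≤ x v := by rw [← hMdef]; linarith
    set S := univ.filter (fun i => c < x i) with hSdef
    clear_value S
    have hvS : v ∈ S := by
      rw [hSdef, mem_filter]
      exact ⟨mem_univ _, by rw [← hMdef]; linarith⟩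
    have hSsum : (S.card : ℝ) * c < 1 := by
      have h1 : ∑ _i ∈ S, c < ∑ i ∈ S, x i :=
        Finset.sum_lt_sum_of_nonempty ⟨v, hvS⟩
          (fun i hi => by rw [hSdef] at hi; exact (mem_filter.mp hi).2)
      have h2 : ∑ i ∈ S, x i ≤ ∑ i, x i :=
        Finset.sum_le_sum_of_subset_of_nonneg (subset_univ S) (fun i _ _ => hx0 i)
      rw [Finset.sum_const, nsmul_eq_mul] at h1
      rw [hx1] at h2
      linarith
    have hSk : (S.card : ℝ) < (k:ℝ) := by
      rw [hcdef] at hSsum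
      rw [← (div_lt_one hkpos)]
      calc (S.card:ℝ) / k = S.card * (1 / k) := by ring
        _ < 1 := hSsum
    have hSkn : S.card < k := by exact_mod_cast hSk
    have hScard : (S.card : ℝ) < 3 / M := by
      have : (S.card : ℝ) + 1 ≤ k := by exact_mod_cast hSkn
      linarith
    have hkn : k ≤ n := by
      rw [hkdef, Nat.ceil_le]
      have : (3:ℝ) / M < n := by
        rw [div_lt_iff₀ hMpos]
        rw [div_lt_iff₀ hn] at hM3
        linarith
      linarith
    have hExu : ∃ u, x u ≤ c := by
      by_contra hcon
      push_neg at hcon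
      have hSu : S = univ := by
        rw [hSdef]
        ext i
        simp only [mem_filter, mem_univ, true_and, iff_true]
        exact hcon i
      have : S.card = n := by rw [hSu, card_univ, Fintype.card_fin]
      omega
    have hcore := core hconn x c v hcv hExu
    rw [← hSdef] at hcore
    have hΦM : nodePotential x ≤ M := by
      have : (0:ℝ) < 1 / n := by positivity
      linarith
    have hSr : (1:ℝ) ≤ (S.card : ℝ) := by
      have : 0 < S.card := card_pos.mpr ⟨v, hvS⟩
      exact_mod_cast this
    have hSpos : (0:ℝ) < (S.card:ℝ) := by linarith
    have h6 : (4/27) * M ^ 3 * S.card ≤ (4/9) * M ^ 2 := by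
      have hmul := mul_le_mul_of_nonneg_left hScard.le
        (show (0:ℝ) ≤ (4/27) * M ^ 3 by positivity)
      have heq : (4/27) * M ^ 3 * (3 / M) = (4/9) * M ^ 2 := by
        field_simp
        ring
      linarith
    have h7 : (4/9) * M ^ 2 ≤ (x v - c) ^ 2 := by
      rw [← hMdef]
      nlinarith [hcM, hMpos]
    have hΦ3 : nodePotential x ^ 3 ≤ M ^ 3 := pow_le_pow_left₀ hΦ0 hΦM 3
    have step1 : (4/27) * nodePotential x ^ 3 * S.card ≤ (4/27) * M ^ 3 * S.card := by
      have := mul_le_mul_of_nonneg_right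
        (mul_le_mul_of_nonneg_left hΦ3 (show (0:ℝ) ≤ 4/27 by norm_num)) hSpos.le
      linarith
    have hfin : (S.card:ℝ) * ((4/27) * nodePotential x ^ 3)
        ≤ (S.card:ℝ) * edgePotential G x := by
      linarith [hcore, h6, h7, step1]
    exact le_of_mul_le_mul_left hfin hSpos
  · -- Case B
    push_neg at hM3
    set c := 1 / (n:ℝ) with hcdef
    clear_value c
    have hcv : c ≤ x v := by
      rw [← hMdef, hcdef, div_le_iff₀ hn]
      nlinarith
    have hExu : ∃ u, x u ≤ c := by
      by_contra hcon
      push_neg at hcon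
      have h1 : ∑ _i : Fin n, c < ∑ i, x i :=
        Finset.sum_lt_sum_of_nonempty ⟨⟨0, Nat.pos_of_ne_zero hn0⟩, mem_univ _⟩
          (fun i _ => hcon i)
      rw [Finset.sum_const, Finset.card_univ, Fintype.card_fin, nsmul_eq_mul, hcdef,
        hx1] at h1
      rw [mul_one_div, div_self (ne_of_gt hn)] at h1
      exact lt_irrefl 1 h1
    obtain ⟨u, hu⟩ := hExu
    set S := univ.filter (fun i => c < x i) with hSdef
    clear_value S
    have hSsub : S ⊆ univ.erase u := by
      intro i hi
      rw [mem_erase]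
      refine ⟨?_, mem_univ _⟩
      rintro rfl
      rw [hSdef] at hi
      exact absurd (mem_filter.mp hi).2 (not_lt.mpr hu)
    have hScard : S.card ≤ n - 1 := by
      have := Finset.card_le_card hSsub
      rw [Finset.card_erase_of_mem (mem_univ u), card_univ, Fintype.card_fin] at this
      exact this
    have hScr : (S.card : ℝ) ≤ (n:ℝ) - 1 := by
      have h1 : (S.card:ℝ) ≤ ((n - 1 : ℕ) : ℝ) := by exact_mod_cast hScard
      have h2 : ((n - 1 : ℕ) : ℝ) = (n:ℝ) - 1 := by
        rw [Nat.cast_sub (Nat.pos_of_ne_zero hn0)]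
        norm_num
      linarith
    have hcore := core hconn x c v hcv ⟨u, hu⟩
    rw [← hSdef] at hcore
    have hΦ2 : nodePotential x ^ 2 ≤ (x v - c) ^ 2 := by
      apply pow_le_pow_left₀ hΦ0
      rw [← hMdef, hcdef]
      linarith
    have hΦn : nodePotential x ≤ 2 / n := by
      have : M - 1 / n ≤ 2 / n := by
        rw [sub_le_iff_le_add]
        calc M ≤ 3 / n := hM3
          _ = 2 / n + 1 / n := by ring
      linarith
    have hS0 : (0:ℝ) ≤ (S.card:ℝ) := by positivity
    rcases Nat.eq_zero_or_pos S.card with h0 | h0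
    · have hx0' : (x v - c) ^ 2 ≤ 0 := by
        rw [h0] at hcore
        simpa using hcore
      have hsq : nodePotential x ^ 2 = 0 :=
        le_antisymm (hΦ2.trans hx0') (sq_nonneg _)
      have hΦz : nodePotential x = 0 :=
        (pow_eq_zero_iff (by norm_num : (2:ℕ) ≠ 0)).mp hsq
      rw [hΦz]
      simpa using hG0
    · have hSr : (1:ℝ) ≤ (S.card : ℝ) := by exact_mod_cast h0
      have hSpos : (0:ℝ) < (S.card:ℝ) := by linarith
      -- Φ·S.card ≤ 2
      have hprod : nodePotential x * S.card ≤ 2 := by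
        have h1 : nodePotential x * S.card ≤ (2/n) * ((n:ℝ) - 1) := by
          apply mul_le_mul hΦn hScr hS0 (by positivity)
        have h2 : (2/(n:ℝ)) * ((n:ℝ) - 1) ≤ 2 := by
          rw [div_mul_eq_mul_div, div_le_iff₀ hn]
          nlinarith
        linarith
      have step1 : (4/27) * nodePotential x ^ 2 * (nodePotential x * S.card)
          ≤ (4/27) * nodePotential x ^ 2 * 2 :=
        mul_le_mul_of_nonneg_left hprod (by positivity)
      have hfin : (S.card:ℝ) * ((4/27) * nodePotential x ^ 3)
          ≤ (S.card:ℝ) * edgePotential G x := by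
        linarith [hcore, hΦ2, step1, sq_nonneg (nodePotential x)]
      exact le_of_mul_le_mul_left hfin hSpos

end Aux
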